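/- Let M₁, M₂ be ITL^e models and Z_n ⊆ ⋯ ⊆ Z_0 a bounded □-bisimulation. Then for all i ≤ n, if w₁ Z_i w₂, then for every formula φ in the language with atoms, ⊥, ∧, ∨, →, ◯, □ of length |φ| ≤ i: M₁, w₁ ⊨ φ iff M₂, w₂ ⊨ φ. -/

import Mathlib

inductive TForm : Type where
  | atom : ℕ → TForm
  | bot : TForm
  | and : TForm → TForm → TForm
  | or : TForm → TForm → TForm
  | imp : TForm → TForm → TForm
  | next : TForm → TForm
  | dia : TForm → TForm
  | box : TForm → TForm
  | untl : TForm → TForm → TForm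
  | rels : TForm → TForm → TForm

/-- Intuitionistic temporal satisfaction over a dynamic poset `(W, ≤, S)`
with valuation `V`. -/
def sat {W : Type} [PartialOrder W] (S : W → W) (V : W → ℕ → Prop) : TForm → W → Prop
  | .atom p, w => V w p
  | .bot, _ => False
  | .and φ ψ, w => sat S V φ w ∧ sat S V ψ w
  | .or φ ψ, w => sat S V φ w ∨ sat S V ψ w
  | .imp φ ψ, w => ∀ v, w ≤ v → sat S V φ v → sat S V ψ v
  | .next φ, w => sat S V φ (S w)
  | .dia φ, w => ∃ k, sat S V φ (S^[k] w)
  | .box φ, w => ∀ k, sat S V φ (S^[k] w)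
  | .untl φ ψ, w => ∃ k, sat S V ψ (S^[k] w) ∧ ∀ i < k, sat S V φ (S^[i] w)
  | .rels φ ψ, w => ∀ k, sat S V ψ (S^[k] w) ∨ ∃ i < k, sat S V φ (S^[i] w)

/-- The length (number of connectives) of a formula. -/
def len : TForm → ℕ
  | .atom _ => 0
  | .bot => 0
  | .and φ ψ => 1 + len φ + len ψ
  | .or φ ψ => 1 + len φ + len ψ
  | .imp φ ψ => 1 + len φ + len ψ
  | .next φ => 1 + len φ
  | .dia φ => 1 + len φ
  | .box φ => 1 + len φ
  | .untl φ ψ => 1 + len φ + len ψ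
  | .rels φ ψ => 1 + len φ + len ψ

/-- Formulas using only the connectives ⊥, ∧, ∨, →, and {next, box}. -/
def LangBox : TForm → Prop
  | .atom _ => True
  | .bot => True
  | .and φ ψ => LangBox φ ∧ LangBox ψ
  | .or φ ψ => LangBox φ ∧ LangBox ψ
  | .imp φ ψ => LangBox φ ∧ LangBox ψ
  | .next φ => LangBox φ
  | .dia _ => False
  | .box φ => LangBox φ
  | .untl _ _ => False
  | .rels _ _ => False

/-!
Induction on the formula, with the index `i` bounding its length. Each connective of length
`i + 1` is reduced to its subformulas at level `i`: implications through the zig-zag clauses,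
`◯` through the successor clause. For `□`, the bisimulation only matches `S^k(w)` up to the
order, in opposite directions on the two sides; the mismatch is absorbed by the fact that
truth sets are upward closed.
-/

section Monotonicity

variable {W : Type} [PartialOrder W] {S : W → W} {V : W → ℕ → Prop}

theorem sat_monotone (hS : Monotone S) (hV : ∀ p, Monotone fun w => V w p) :
    ∀ φ, Monotone (sat S V φ)
  | .atom p, _, _, h => hV p h
  | .bot, _, _, _ => id
  | .and φ ψ, _, _, h => And.imp (sat_monotone hS hV φ h) (sat_monotone hS hV ψ h)
  | .or φ ψ, _, _, h => Or.imp (sat_monotone hS hV φ h) (sat_monotone hS hV ψ h)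
  | .imp _ _, _, _, h => fun hw u hu => hw u (h.trans hu)
  | .next φ, _, _, h => sat_monotone hS hV φ (hS h)
  | .dia φ, _, _, h => Exists.imp fun k => sat_monotone hS hV φ (hS.iterate k h)
  | .box φ, _, _, h => fun hw k => sat_monotone hS hV φ (hS.iterate k h) (hw k)
  | .untl φ ψ, _, _, h => Exists.imp fun k => And.imp
      (sat_monotone hS hV ψ (hS.iterate k h))
      (forall₂_imp fun i _ => sat_monotone hS hV φ (hS.iterate i h))
  | .rels φ ψ, _, _, h => fun hw k => (hw k).imp
      (sat_monotone hS hV ψ (hS.iterate k h))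
      (Exists.imp fun i => And.imp_right (sat_monotone hS hV φ (hS.iterate i h)))

end Monotonicity

section Steps

variable {W₁ W₂ : Type} [PartialOrder W₁] [PartialOrder W₂]
  {S₁ : W₁ → W₁} {V₁ : W₁ → ℕ → Prop} {S₂ : W₂ → W₂} {V₂ : W₂ → ℕ → Prop}
  (R : W₁ → W₂ → Prop) {φ ψ : TForm} {w₁ : W₁} {w₂ : W₂}

theorem sat_imp_iff_of_zigzag
    (forth : ∀ v₁, w₁ ≤ v₁ → ∃ v₂, w₂ ≤ v₂ ∧ R v₁ v₂)
    (back : ∀ v₂, w₂ ≤ v₂ → ∃ v₁, w₁ ≤ v₁ ∧ R v₁ v₂)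
    (hφ : ∀ v₁ v₂, R v₁ v₂ → (sat S₁ V₁ φ v₁ ↔ sat S₂ V₂ φ v₂))
    (hψ : ∀ v₁ v₂, R v₁ v₂ → (sat S₁ V₁ ψ v₁ ↔ sat S₂ V₂ ψ v₂)) :
    sat S₁ V₁ (.imp φ ψ) w₁ ↔ sat S₂ V₂ (.imp φ ψ) w₂ := by
  constructor
  · intro h v₂ hv₂ hφ₂
    obtain ⟨v₁, hv₁, hR⟩ := back v₂ hv₂
    exact (hψ _ _ hR).mp (h v₁ hv₁ ((hφ _ _ hR).mpr hφ₂))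
  · intro h v₁ hv₁ hφ₁
    obtain ⟨v₂, hv₂, hR⟩ := forth v₁ hv₁
    exact (hψ _ _ hR).mpr (h v₂ hv₂ ((hφ _ _ hR).mp hφ₁))

theorem sat_box_iff_of_zigzag
    (mono₁ : Monotone (sat S₁ V₁ φ)) (mono₂ : Monotone (sat S₂ V₂ φ))
    (forth : ∀ k₂ : ℕ, ∃ k₁ : ℕ, ∃ v₁ v₂, v₂ ≤ S₂^[k₂] w₂ ∧ S₁^[k₁] w₁ ≤ v₁ ∧ R v₁ v₂)
    (back : ∀ k₁ : ℕ, ∃ k₂ : ℕ, ∃ v₁ v₂, v₁ ≤ S₁^[k₁] w₁ ∧ S₂^[k₂] w₂ ≤ v₂ ∧ R v₁ v₂)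
    (hφ : ∀ v₁ v₂, R v₁ v₂ → (sat S₁ V₁ φ v₁ ↔ sat S₂ V₂ φ v₂)) :
    sat S₁ V₁ (.box φ) w₁ ↔ sat S₂ V₂ (.box φ) w₂ := by
  constructor
  · intro h k₂
    obtain ⟨k₁, v₁, v₂, hv₂, hv₁, hR⟩ := forth k₂
    exact mono₂ hv₂ ((hφ _ _ hR).mp (mono₁ hv₁ (h k₁)))
  · intro h k₁
    obtain ⟨k₂, v₁, v₂, hv₁, hv₂, hR⟩ := back k₁
    exact mono₁ hv₁ ((hφ _ _ hR).mpr (mono₂ hv₂ (h k₂)))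

end Steps

section Bisimulation

variable {W₁ W₂ : Type} [PartialOrder W₁] [PartialOrder W₂]

structure IsBoundedBoxBisimulation (S₁ : W₁ → W₁) (V₁ : W₁ → ℕ → Prop) (S₂ : W₂ → W₂)
    (V₂ : W₂ → ℕ → Prop) (n : ℕ) (Z : ℕ → W₁ → W₂ → Prop) : Prop where
  chain : ∀ i < n, ∀ w₁ w₂, Z (i+1) w₁ w₂ → Z i w₁ w₂
  atoms : ∀ i < n, ∀ w₁ w₂, Z i w₁ w₂ → ∀ p, V₁ w₁ p ↔ V₂ w₂ p
  forth_imp : ∀ i < n, ∀ w₁ w₂, Z (i+1) w₁ w₂ → ∀ v₁, w₁ ≤ v₁ → ∃ v₂, w₂ ≤ v₂ ∧ Z i v₁ v₂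
  back_imp : ∀ i < n, ∀ w₁ w₂, Z (i+1) w₁ w₂ → ∀ v₂, w₂ ≤ v₂ → ∃ v₁, w₁ ≤ v₁ ∧ Z i v₁ v₂
  next : ∀ i < n, ∀ w₁ w₂, Z (i+1) w₁ w₂ → Z i (S₁ w₁) (S₂ w₂)
  forth_box : ∀ i < n, ∀ w₁ w₂, Z (i+1) w₁ w₂ → ∀ k₂ : ℕ, ∃ k₁ : ℕ, ∃ v₁ v₂,
    v₂ ≤ S₂^[k₂] w₂ ∧ S₁^[k₁] w₁ ≤ v₁ ∧ Z i v₁ v₂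
  back_box : ∀ i < n, ∀ w₁ w₂, Z (i+1) w₁ w₂ → ∀ k₁ : ℕ, ∃ k₂ : ℕ, ∃ v₁ v₂,
    v₁ ≤ S₁^[k₁] w₁ ∧ S₂^[k₂] w₂ ≤ v₂ ∧ Z i v₁ v₂

namespace IsBoundedBoxBisimulation

variable {S₁ : W₁ → W₁} {V₁ : W₁ → ℕ → Prop} {S₂ : W₂ → W₂} {V₂ : W₂ → ℕ → Prop}
  {n : ℕ} {Z : ℕ → W₁ → W₂ → Prop}

theorem atoms_of_le (hZ : IsBoundedBoxBisimulation S₁ V₁ S₂ V₂ n Z) (hn : 0 < n)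
    {i : ℕ} (hi : i ≤ n) {w₁ : W₁} {w₂ : W₂} (hw : Z i w₁ w₂) (p : ℕ) :
    V₁ w₁ p ↔ V₂ w₂ p := by
  rcases hi.lt_or_eq with hi | rfl
  · exact hZ.atoms i hi _ _ hw p
  · obtain ⟨j, rfl⟩ := Nat.exists_eq_succ_of_ne_zero hn.ne'
    exact hZ.atoms j j.lt_succ_self _ _ (hZ.chain j j.lt_succ_self _ _ hw) p

theorem sat_iff (hZ : IsBoundedBoxBisimulation S₁ V₁ S₂ V₂ n Z) (hn : 0 < n)
    (hS₁ : Monotone S₁) (hV₁ : ∀ p, Monotone fun w => V₁ w p)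
    (hS₂ : Monotone S₂) (hV₂ : ∀ p, Monotone fun w => V₂ w p) :
    ∀ φ, LangBox φ → ∀ i ≤ n, len φ ≤ i → ∀ w₁ w₂, Z i w₁ w₂ →
      (sat S₁ V₁ φ w₁ ↔ sat S₂ V₂ φ w₂) := by
  intro φ
  induction φ with
  | atom p => exact fun _ i hi _ _ _ hw => hZ.atoms_of_le hn hi hw p
  | bot => exact fun _ _ _ _ _ _ _ => Iff.rfl
  | and φ ψ ihφ ihψ =>
    intro hL i hi hlen w₁ w₂ hw
    simp only [len] at hlen
    exact and_congr (ihφ hL.1 i hi (by omega) _ _ hw) (ihψ hL.2 i hi (by omega) _ _ hw)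
  | or φ ψ ihφ ihψ =>
    intro hL i hi hlen w₁ w₂ hw
    simp only [len] at hlen
    exact or_congr (ihφ hL.1 i hi (by omega) _ _ hw) (ihψ hL.2 i hi (by omega) _ _ hw)
  | imp φ ψ ihφ ihψ =>
    intro hL i hi hlen w₁ w₂ hw
    simp only [len] at hlen
    obtain ⟨j, rfl⟩ : ∃ j, i = j + 1 := ⟨i - 1, by omega⟩
    exact sat_imp_iff_of_zigzag (Z j) (hZ.forth_imp j hi _ _ hw) (hZ.back_imp j hi _ _ hw)
      (ihφ hL.1 j (Nat.le_of_succ_le hi) (by omega))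
      (ihψ hL.2 j (Nat.le_of_succ_le hi) (by omega))
  | next φ ih =>
    intro hL i hi hlen w₁ w₂ hw
    simp only [len] at hlen
    obtain ⟨j, rfl⟩ : ∃ j, i = j + 1 := ⟨i - 1, by omega⟩
    exact ih hL j (Nat.le_of_succ_le hi) (by omega) _ _ (hZ.next j hi _ _ hw)
  | box φ ih =>
    intro hL i hi hlen w₁ w₂ hw
    simp only [len] at hlen
    obtain ⟨j, rfl⟩ : ∃ j, i = j + 1 := ⟨i - 1, by omega⟩
    exact sat_box_iff_of_zigzag (Z j) (sat_monotone hS₁ hV₁ φ) (sat_monotone hS₂ hV₂ φ)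
      (hZ.forth_box j hi _ _ hw) (hZ.back_box j hi _ _ hw)
      (ih hL j (Nat.le_of_succ_le hi) (by omega))
  | dia | untl | rels => exact fun hL => hL.elim

end IsBoundedBoxBisimulation

end Bisimulation

/-- Bounded □-bisimulations preserve □-formulas of bounded length. -/
theorem box_bisim_invariance {W₁ W₂ : Type} [PartialOrder W₁] [PartialOrder W₂]
    (S₁ : W₁ → W₁) (V₁ : W₁ → ℕ → Prop) (S₂ : W₂ → W₂) (V₂ : W₂ → ℕ → Prop)
    (hS₁ : ∀ w v : W₁, w ≤ v → S₁ w ≤ S₁ v)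
    (hV₁ : ∀ w v : W₁, w ≤ v → ∀ p, V₁ w p → V₁ v p)
    (hS₂ : ∀ w v : W₂, w ≤ v → S₂ w ≤ S₂ v)
    (hV₂ : ∀ w v : W₂, w ≤ v → ∀ p, V₂ w p → V₂ v p)
    (n : ℕ) (hn : 0 < n) (Z : ℕ → W₁ → W₂ → Prop)
    (hchain : ∀ i < n, ∀ w₁ w₂, Z (i+1) w₁ w₂ → Z i w₁ w₂)
    (hatoms : ∀ i < n, ∀ w₁ w₂, Z i w₁ w₂ → ∀ p, V₁ w₁ p ↔ V₂ w₂ p)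
    (hforth_imp : ∀ i < n, ∀ w₁ w₂, Z (i+1) w₁ w₂ →
      ∀ v₁, w₁ ≤ v₁ → ∃ v₂, w₂ ≤ v₂ ∧ Z i v₁ v₂)
    (hback_imp : ∀ i < n, ∀ w₁ w₂, Z (i+1) w₁ w₂ →
      ∀ v₂, w₂ ≤ v₂ → ∃ v₁, w₁ ≤ v₁ ∧ Z i v₁ v₂)
    (hnext : ∀ i < n, ∀ w₁ w₂, Z (i+1) w₁ w₂ → Z i (S₁ w₁) (S₂ w₂))
    (hforth_box : ∀ i < n, ∀ w₁ w₂, Z (i+1) w₁ w₂ → ∀ k₂ : ℕ, ∃ k₁ : ℕ, ∃ v₁ v₂,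
      v₂ ≤ S₂^[k₂] w₂ ∧ S₁^[k₁] w₁ ≤ v₁ ∧ Z i v₁ v₂)
    (hback_box : ∀ i < n, ∀ w₁ w₂, Z (i+1) w₁ w₂ → ∀ k₁ : ℕ, ∃ k₂ : ℕ, ∃ v₁ v₂,
      v₁ ≤ S₁^[k₁] w₁ ∧ S₂^[k₂] w₂ ≤ v₂ ∧ Z i v₁ v₂) :
    ∀ i ≤ n, ∀ w₁ w₂, Z i w₁ w₂ → ∀ φ, LangBox φ → len φ ≤ i →
      (sat S₁ V₁ φ w₁ ↔ sat S₂ V₂ φ w₂) := by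
  intro i hi w₁ w₂ hw φ hL hlen
  have hZ : IsBoundedBoxBisimulation S₁ V₁ S₂ V₂ n Z :=
    ⟨hchain, hatoms, hforth_imp, hback_imp, hnext, hforth_box, hback_box⟩
  exact hZ.sat_iff hn (fun w v h => hS₁ w v h) (fun p w v h => hV₁ w v h p)
    (fun w v h => hS₂ w v h) (fun p w v h => hV₂ w v h p) φ hL i hi hlen w₁ w₂ hw
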